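/- arXiv:2207.12480 — 2 statements merged into one kernel-verified Lean document; each statement's English description precedes it below -/
import Mathlib

section
/- For the MDPDE loss in the linear mixed model with y ~ N(Xβ, V), the β-block of the generalized information matrix equals E[∇_β ρ ∇_β ρ^T] = α² L₂² |V|^{-α} (1+2α)^{-(1+m/2)} X^T V^{-1} X, which is positive definite whenever V is positive definite and X has full column rank. -/
/-!
Translating by `Xβ`, the integrand is `(Mz)ᵢ (Mz)ⱼ exp(-(1+2α)/2 · zᵀV⁻¹z)` with `M = XᵀV⁻¹`, an
unnormalised second moment of the Gaussian with covariance `V/(1+2α)`. Writing `V = S Sᵀ` and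
substituting `z = S u` reduces any such moment to the standard Gaussian on `ℝᵐ`, whose moments
factor over the coordinates into one-dimensional standard normal moments (`E[1] = E[x²] = 1`,
`E[x] = 0`). The covariance contributes `(1+2α)⁻¹` and the normalising constant
`(1+2α)^{-m/2}`. Positive definiteness holds because `XᵀV⁻¹X` is a congruence of `V⁻¹ ≻ 0` by the
injective `X`.
-/

open MeasureTheory Matrix Real ProbabilityTheory

theorem Real.sqrt_pow {x : ℝ} (hx : 0 ≤ x) (n : ℕ) : √(x ^ n) = √x ^ n := by
  rw [← sqrt_sq (pow_nonneg (sqrt_nonneg x) n), ← pow_mul, mul_comm, pow_mul, sq_sqrt hx]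

lemma sqrt_inv_pow_mul_inv {a : ℝ} (ha : 0 < a) (m : ℕ) :
    √(a⁻¹ ^ m) * a⁻¹ = a ^ (-(1 + (m : ℝ) / 2)) := by
  have ha' : 0 ≤ a⁻¹ := inv_nonneg.mpr ha.le
  rw [sqrt_eq_rpow, ← rpow_natCast, ← rpow_mul ha', ← rpow_add_one (inv_ne_zero ha.ne'),
    inv_rpow ha.le, ← rpow_neg ha.le]
  ring_nf

lemma rpow_neg_div_two_sq {d : ℝ} (hd : 0 ≤ d) (α : ℝ) : (d ^ (-(α / 2))) ^ 2 = d ^ (-α) := by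
  rw [← rpow_natCast, ← rpow_mul hd]
  norm_num

lemma integral_mul_exp_neg_half_sq_eq_integral_gaussianReal (f : ℝ → ℝ) :
    ∫ x, f x * exp (-(1 / 2) * x ^ 2) = √(2 * π) * ∫ x, f x ∂gaussianReal 0 1 := by
  rw [integral_gaussianReal_eq_integral_smul one_ne_zero, ← integral_const_mul]
  congr 1 with x
  have : √(2 * π) ≠ 0 := by positivity
  simp only [gaussianPDFReal_def, NNReal.coe_one, mul_one, sub_zero, smul_eq_mul]
  field_simp

lemma integral_sq_gaussianReal_zero (v : NNReal) : ∫ x, x ^ 2 ∂gaussianReal 0 v = v := by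
  simpa [variance_eq_integral measurable_id.aemeasurable] using
    variance_id_gaussianReal (μ := 0) (v := v)

lemma integrable_pow_mul_exp_neg_half_sq (n : ℕ) :
    Integrable fun x : ℝ => x ^ n * exp (-(1 / 2) * x ^ 2) := by
  simpa [rpow_natCast] using integrable_rpow_mul_exp_neg_mul_sq (by norm_num : (0:ℝ) < 1 / 2)
    (neg_one_lt_zero.trans_le n.cast_nonneg)

lemma integral_ite_mul_ite_gaussianReal {ι : Type*} [DecidableEq ι] (k l r : ι) :
    ∫ x, (if r = k then x else 1) * (if r = l then x else 1) ∂gaussianReal 0 1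
      = if (r = k ↔ r = l) then 1 else 0 := by
  rcases eq_or_ne r k with rfl | hk <;> rcases eq_or_ne r l with rfl | hl <;>
    simp [*, ← sq, integral_sq_gaussianReal_zero, integral_id_gaussianReal]

section StandardGaussian

variable {ι κ : Type*} [Fintype ι]

lemma prod_mul_exp_neg_half_sum_sq (f : ι → ℝ → ℝ) (u : ι → ℝ) :
    (∏ r, f r (u r)) * exp (-(1 / 2) * ∑ r, u r ^ 2)
      = ∏ r, f r (u r) * exp (-(1 / 2) * u r ^ 2) := by
  rw [Finset.prod_mul_distrib, Finset.mul_sum, exp_sum]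

lemma integral_prod_mul_exp_neg_half_sum_sq (f : ι → ℝ → ℝ) :
    ∫ u : ι → ℝ, (∏ r, f r (u r)) * exp (-(1 / 2) * ∑ r, u r ^ 2)
      = √(2 * π) ^ Fintype.card ι * ∏ r, ∫ x, f r x ∂gaussianReal 0 1 := by
  simp_rw [prod_mul_exp_neg_half_sum_sq]
  rw [integral_fintype_prod_volume_eq_prod fun r x => f r x * exp (-(1 / 2) * x ^ 2)]
  simp_rw [integral_mul_exp_neg_half_sq_eq_integral_gaussianReal, Finset.prod_mul_distrib,
    Finset.prod_const, Finset.card_univ]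

lemma integrable_prod_mul_exp_neg_half_sum_sq {f : ι → ℝ → ℝ}
    (hf : ∀ r, Integrable fun x => f r x * exp (-(1 / 2) * x ^ 2)) :
    Integrable fun u : ι → ℝ => (∏ r, f r (u r)) * exp (-(1 / 2) * ∑ r, u r ^ 2) := by
  simp_rw [prod_mul_exp_neg_half_sum_sq]
  exact Integrable.fintype_prod hf

variable [DecidableEq ι]

lemma prod_ite_mul_ite (k l : ι) (u : ι → ℝ) :
    ∏ r, (if r = k then u r else 1) * (if r = l then u r else 1) = u k * u l := by
  simp only [Finset.prod_mul_distrib, Finset.prod_ite_eq', Finset.mem_univ, if_true]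

lemma integral_mul_mul_exp_neg_half_sum_sq (k l : ι) :
    ∫ u : ι → ℝ, u k * u l * exp (-(1 / 2) * ∑ r, u r ^ 2)
      = if k = l then √(2 * π) ^ Fintype.card ι else 0 := by
  simp_rw [← prod_ite_mul_ite k l]
  rw [integral_prod_mul_exp_neg_half_sum_sq
    (fun r x => (if r = k then x else 1) * (if r = l then x else 1))]
  have hkl : (∀ r, r = k ↔ r = l) ↔ k = l := ⟨fun h => (h k).1 rfl, fun h _ => h ▸ Iff.rfl⟩
  simp_rw [integral_ite_mul_ite_gaussianReal, Finset.prod_boole, Finset.mem_univ, true_imp_iff,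
    hkl, mul_ite, mul_one, mul_zero]

lemma integrable_mul_mul_exp_neg_half_sum_sq (k l : ι) :
    Integrable fun u : ι → ℝ => u k * u l * exp (-(1 / 2) * ∑ r, u r ^ 2) := by
  simp_rw [← prod_ite_mul_ite k l]
  refine integrable_prod_mul_exp_neg_half_sum_sq
    (f := fun r x => (if r = k then x else 1) * (if r = l then x else 1)) fun r => ?_
  split_ifs
  · simpa [← sq] using integrable_pow_mul_exp_neg_half_sq 2
  · simpa using integrable_pow_mul_exp_neg_half_sq 1
  · simpa using integrable_pow_mul_exp_neg_half_sq 1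
  · simpa using integrable_pow_mul_exp_neg_half_sq 0

lemma integral_mulVec_mul_mulVec_mul_exp_neg_half_sum_sq (N : Matrix κ ι ℝ) (i j : κ) :
    ∫ u : ι → ℝ, (N *ᵥ u) i * (N *ᵥ u) j * exp (-(1 / 2) * ∑ r, u r ^ 2)
      = √(2 * π) ^ Fintype.card ι * (N * Nᵀ) i j := by
  have hexpand : ∀ u : ι → ℝ, (N *ᵥ u) i * (N *ᵥ u) j * exp (-(1 / 2) * ∑ r, u r ^ 2)
      = ∑ k, ∑ l, N i k * N j l * (u k * u l * exp (-(1 / 2) * ∑ r, u r ^ 2)) := by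
    intro u
    simp only [mulVec, dotProduct]
    rw [Finset.sum_mul_sum, Finset.sum_mul]
    refine Finset.sum_congr rfl fun k _ => ?_
    rw [Finset.sum_mul]
    exact Finset.sum_congr rfl fun l _ => by ring
  have hint (k l : ι) := (integrable_mul_mul_exp_neg_half_sum_sq k l).const_mul (N i k * N j l)
  simp_rw [hexpand]
  rw [integral_finsetSum _ fun k _ => integrable_finsetSum _ fun l _ => hint k l]
  simp_rw [integral_finsetSum _ fun l _ => hint _ l, integral_const_mul,
    integral_mul_mul_exp_neg_half_sum_sq, mul_ite, mul_zero, Finset.sum_ite_eq,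
    Finset.mem_univ, if_true, mul_apply, transpose_apply, Finset.mul_sum]
  exact Finset.sum_congr rfl fun k _ => by ring

end StandardGaussian

section GaussianQuadraticForm

variable {ι κ : Type*} [Fintype ι] [DecidableEq ι]

lemma integral_comp_mulVec {A : Matrix ι ι ℝ} (hA : A.det ≠ 0) (f : (ι → ℝ) → ℝ) :
    ∫ x, f (A *ᵥ x) = |A.det|⁻¹ * ∫ y, f y := by
  let e : (ι → ℝ) ≃ᵐ (ι → ℝ) := (A.toLinearEquiv' (invertibleOfIsUnitDet A hA.isUnit))
    |>.toContinuousLinearEquiv.toHomeomorph.toMeasurableEquiv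
  have hmap : Measure.map e volume = ENNReal.ofReal |A.det⁻¹| • volume :=
    Real.map_matrix_volume_pi_eq_smul_volume_pi hA
  change ∫ x, f (e x) = _
  rw [← integral_map_equiv e, hmap, integral_smul_measure, ENNReal.toReal_ofReal (abs_nonneg _),
    abs_inv, smul_eq_mul]

lemma exists_mul_transpose_eq_of_posSemidef {V : Matrix ι ι ℝ} (hV : V.PosSemidef) :
    ∃ S : Matrix ι ι ℝ, S * Sᵀ = V := by
  open scoped MatrixOrder in
  obtain ⟨B, hB⟩ := CStarAlgebra.nonneg_iff_eq_star_mul_self.mp hV.nonneg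
  exact ⟨Bᵀ, by
    rw [hB, transpose_transpose, star_eq_conjTranspose, conjTranspose_eq_transpose_of_trivial]⟩

lemma dotProduct_mulVec_inv_mul_transpose {S : Matrix ι ι ℝ} (hS : S.det ≠ 0) (u : ι → ℝ) :
    (S *ᵥ u) ⬝ᵥ (S * Sᵀ)⁻¹ *ᵥ (S *ᵥ u) = ∑ r, u r ^ 2 := by
  have hST : IsUnit Sᵀ.det := by rw [det_transpose]; exact hS.isUnit
  rw [mulVec_mulVec, dotProduct_comm, dotProduct_mulVec, ← mulVec_transpose, mulVec_mulVec,
    Matrix.mul_inv_rev, ← Matrix.mul_assoc, ← Matrix.mul_assoc, mul_nonsing_inv _ hST,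
    Matrix.one_mul, nonsing_inv_mul _ hS.isUnit, one_mulVec]
  simp [dotProduct, sq]

theorem integral_mulVec_mul_mulVec_mul_exp_neg_half_inv_quadForm {V : Matrix ι ι ℝ}
    (hV : V.PosDef) (M : Matrix κ ι ℝ) (i j : κ) :
    ∫ z : ι → ℝ, (M *ᵥ z) i * (M *ᵥ z) j * exp (-(1 / 2) * (z ⬝ᵥ V⁻¹ *ᵥ z))
      = √((2 * π) ^ Fintype.card ι * V.det) * (M * V * Mᵀ) i j := by
  obtain ⟨S, rfl⟩ := exists_mul_transpose_eq_of_posSemidef hV.posSemidef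
  have hdet : (S * Sᵀ).det = S.det ^ 2 := by rw [det_mul, det_transpose, sq]
  have hS : S.det ≠ 0 := fun h => hV.det_pos.ne' (by rw [hdet, h, sq, zero_mul])
  rw [← mul_inv_cancel_left₀ (abs_ne_zero.mpr hS) (∫ z, _), ← integral_comp_mulVec hS]
  simp_rw [dotProduct_mulVec_inv_mul_transpose hS, mulVec_mulVec,
    integral_mulVec_mul_mulVec_mul_exp_neg_half_sum_sq, hdet, transpose_mul, Matrix.mul_assoc]
  rw [sqrt_mul (pow_nonneg two_pi_pos.le _), sqrt_sq_eq_abs, Real.sqrt_pow two_pi_pos.le]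
  ring

theorem integral_mulVec_mul_mulVec_mul_exp_neg_mul_inv_quadForm {V : Matrix ι ι ℝ}
    (hV : V.PosDef) {a : ℝ} (ha : 0 < a) (M : Matrix κ ι ℝ) (i j : κ) :
    ∫ z : ι → ℝ, (M *ᵥ z) i * (M *ᵥ z) j * exp (-(a / 2) * (z ⬝ᵥ V⁻¹ *ᵥ z))
      = √((2 * π) ^ Fintype.card ι * V.det) * a ^ (-(1 + (Fintype.card ι : ℝ) / 2))
        * (M * V * Mᵀ) i j := by
  have hWinv : (a⁻¹ • V)⁻¹ = a • V⁻¹ := inv_eq_left_inv <| by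
    rw [smul_mul_smul_comm, mul_inv_cancel₀ ha.ne', one_smul,
      nonsing_inv_mul _ (isUnit_iff_ne_zero.mpr hV.det_pos.ne')]
  have hexp (z : ι → ℝ) : -(a / 2) * (z ⬝ᵥ V⁻¹ *ᵥ z) = -(1 / 2) * (z ⬝ᵥ (a⁻¹ • V)⁻¹ *ᵥ z) := by
    rw [hWinv, smul_mulVec, dotProduct_smul, smul_eq_mul]
    ring
  simp_rw [hexp,
    integral_mulVec_mul_mulVec_mul_exp_neg_half_inv_quadForm (hV.smul (inv_pos.mpr ha)), det_smul,
    mul_left_comm _ (a⁻¹ ^ _), sqrt_mul (pow_nonneg (inv_nonneg.mpr ha.le) _),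
    Matrix.mul_smul, Matrix.smul_mul, Matrix.smul_apply, smul_eq_mul, ← sqrt_inv_pow_mul_inv ha]
  ring

lemma Matrix.PosDef.transpose_mul_inv_mul_self_mul_transpose {V : Matrix ι ι ℝ} (hV : V.PosDef)
    (X : Matrix ι κ ℝ) : Xᵀ * V⁻¹ * V * (Xᵀ * V⁻¹)ᵀ = Xᵀ * V⁻¹ * X := by
  have hVinvT : (V⁻¹)ᵀ = V⁻¹ := (conjTranspose_eq_transpose_of_trivial _).symm.trans hV.inv.1
  rw [transpose_mul, hVinvT, transpose_transpose,
    nonsing_inv_mul_cancel_right _ _ (isUnit_iff_ne_zero.mpr hV.det_pos.ne'), Matrix.mul_assoc]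

end GaussianQuadraticForm

/-- For the MDPDE loss in the linear mixed model with
`y ~ N(Xβ, V)`, the `β`-block of the generalized information matrix equals
`E[∇_β ρ ∇_β ρᵀ] = α² L₂² |V|^{-α} (1+2α)^{-(1+m/2)} Xᵀ V⁻¹ X` (stated
entrywise), where
`∇_β ρ = -α L₂ |V|^{-α/2} exp(-(α/2)(y-Xβ)ᵀV⁻¹(y-Xβ)) Xᵀ V⁻¹ (y-Xβ)`;
moreover this matrix is positive definite whenever `V` is positive definite
and `X` has full column rank. -/
theorem stmt15 {m p : ℕ} (X : Matrix (Fin m) (Fin p) ℝ)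
    (hX : Function.Injective X.mulVec) (β : Fin p → ℝ)
    (V : Matrix (Fin m) (Fin m) ℝ) (hV : V.PosDef) (α L₂ : ℝ)
    (hα : 0 < α) (hL₂ : 0 < L₂)
    (g : (Fin m → ℝ) → ℝ)
    (hg : ∀ y, g y = (Real.sqrt ((2 * π) ^ m * V.det))⁻¹ *
      Real.exp (-(1 / 2) * ((y - X *ᵥ β) ⬝ᵥ V⁻¹ *ᵥ (y - X *ᵥ β))))
    (Gβ : (Fin m → ℝ) → (Fin p → ℝ))
    (hGβ : ∀ y, Gβ y = (-α * L₂ * V.det ^ (-(α / 2)) *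
        Real.exp (-(α / 2) * ((y - X *ᵥ β) ⬝ᵥ V⁻¹ *ᵥ (y - X *ᵥ β))))
      • (Xᵀ *ᵥ (V⁻¹ *ᵥ (y - X *ᵥ β)))) :
    (∀ i j : Fin p,
      ∫ y : Fin m → ℝ, (Gβ y i * Gβ y j) * g y
        = α ^ 2 * L₂ ^ 2 * V.det ^ (-α) * (1 + 2 * α) ^ (-(1 + (m : ℝ) / 2))
          * (Xᵀ * V⁻¹ * X) i j)
    ∧ (Matrix.of (fun i j : Fin p =>
        α ^ 2 * L₂ ^ 2 * V.det ^ (-α) * (1 + 2 * α) ^ (-(1 + (m : ℝ) / 2))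
          * (Xᵀ * V⁻¹ * X) i j)).PosDef := by
  have hd : 0 < V.det := hV.det_pos
  have hexp (q : ℝ) : exp (-(α / 2) * q) * exp (-(α / 2) * q) * exp (-(1 / 2) * q)
      = exp (-((1 + 2 * α) / 2) * q) := by
    rw [← exp_add, ← exp_add]
    ring_nf
  set N := √((2 * π) ^ m * V.det)
  have hN : N ≠ 0 := by positivity
  refine ⟨fun i j => ?_, ?_⟩
  · calc ∫ y, Gβ y i * Gβ y j * g y
        = (α * L₂ * V.det ^ (-(α / 2))) ^ 2 * N⁻¹ * ∫ z, ((Xᵀ * V⁻¹) *ᵥ z) i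
            * ((Xᵀ * V⁻¹) *ᵥ z) j * exp (-((1 + 2 * α) / 2) * (z ⬝ᵥ V⁻¹ *ᵥ z)) := by
          conv_rhs => rw [← integral_sub_right_eq_self _ (X *ᵥ β), ← integral_const_mul]
          congr 1 with y
          simp only [hGβ, hg, Pi.smul_apply, smul_eq_mul, mulVec_mulVec, ← hexp]
          ring
      _ = _ := by
          rw [integral_mulVec_mul_mulVec_mul_exp_neg_mul_inv_quadForm hV (by linarith),
            hV.transpose_mul_inv_mul_self_mul_transpose,
            Fintype.card_fin, mul_pow (α * L₂), rpow_neg_div_two_sq hd.le]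
          linear_combination (α * L₂) ^ 2 * V.det ^ (-α) * (1 + 2 * α) ^ (-(1 + (m : ℝ) / 2))
            * (Xᵀ * V⁻¹ * X) i j * inv_mul_cancel₀ hN
  · have h := (hV.inv.conjTranspose_mul_mul_same hX).smul
      (by positivity : 0 < α ^ 2 * L₂ ^ 2 * V.det ^ (-α) * (1 + 2 * α) ^ (-(1 + (m : ℝ) / 2)))
    rw [conjTranspose_eq_transpose_of_trivial] at h
    exact h
end

section
/- The Hessian in β of the MDPDE loss ρ(y, Xβ, η) = L₁|V|^{-α/2} - L₂|V|^{-α/2}exp{-(α/2)(y-Xβ)^T V^{-1}(y-Xβ)} equals (α+1)·c(y,β)·[X^T V^{-1} X - α X^T d d^T X], where d = V^{-1}(y - Xβ) and c(y,β) > 0; hence ρ is convex in β on any region where v^T X^T V^{-1} X v ≥ α (d^T X v)² for all v ∈ ℝᵖ. -/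
open Matrix Real Set

/-!
Along a line `β + t • v` the residual `y - Xβ` moves affinely, so the exponent of `ρ` is a
quadratic polynomial `A + B t + C t²` in `t`, with `B = α dᵀXv` and `C = -(α/2) vᵀXᵀV⁻¹Xv`.
Differentiating `K₁ - K₂ exp (A + B t + C t²)` twice at `0` gives `-K₂ eᴬ (2C + B²)`, which is
the stated Hessian. Convexity on `𝓑` then follows from the one-variable second-derivative test
applied along each segment of `𝓑`: the second derivative at a point of the segment is a second
directional derivative of `ρ` at a point of `𝓑`.
-/

theorem dotProduct_mulVec_sub_smul {n R : Type*} [Fintype n] [CommRing R]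
    {M : Matrix n n R} (hM : M.IsSymm) (r w : n → R) (t : R) :
    (r - t • w) ⬝ᵥ M *ᵥ (r - t • w)
      = r ⬝ᵥ M *ᵥ r - 2 * t * ((M *ᵥ r) ⬝ᵥ w) + t ^ 2 * (w ⬝ᵥ M *ᵥ w) := by
  have hwr : w ⬝ᵥ M *ᵥ r = (M *ᵥ r) ⬝ᵥ w := dotProduct_comm _ _
  have hrw : r ⬝ᵥ M *ᵥ w = (M *ᵥ r) ⬝ᵥ w := by
    rw [dotProduct_mulVec, ← mulVec_transpose, hM]
  simp only [mulVec_sub, mulVec_smul, dotProduct_sub, sub_dotProduct, dotProduct_smul,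
    smul_dotProduct, smul_eq_mul, hwr, hrw]
  ring

theorem dotProduct_transpose_mul_mul_mulVec {m n R : Type*} [Fintype m] [Fintype n]
    [CommRing R] (X : Matrix m n R) (M : Matrix m m R) (v : n → R) :
    v ⬝ᵥ (Xᵀ * M * X) *ᵥ v = (X *ᵥ v) ⬝ᵥ M *ᵥ (X *ᵥ v) := by
  rw [← mulVec_mulVec, ← mulVec_mulVec, dotProduct_mulVec, ← mulVec_transpose,
    transpose_transpose]

theorem hasDerivAt_quadratic (A B C t : ℝ) :
    HasDerivAt (fun s => A + B * s + C * s ^ 2) (B + 2 * C * t) t := by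
  simpa [mul_comm, mul_left_comm] using
    (((hasDerivAt_id t).const_mul B).const_add A).fun_add ((hasDerivAt_pow 2 t).const_mul C)

theorem iteratedDeriv_two_exp_quadratic (A B C t : ℝ) :
    iteratedDeriv 2 (fun s => exp (A + B * s + C * s ^ 2)) t
      = (2 * C + (B + 2 * C * t) ^ 2) * exp (A + B * t + C * t ^ 2) := by
  have hderiv : deriv (fun s => exp (A + B * s + C * s ^ 2))
      = fun s => (B + 2 * C * s) * exp (A + B * s + C * s ^ 2) := by
    funext s
    simpa [mul_comm] using (hasDerivAt_quadratic A B C s).exp.deriv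
  have hslope : HasDerivAt (fun s => B + 2 * C * s) (2 * C) t := by
    simpa using ((hasDerivAt_id t).const_mul (2 * C)).const_add B
  rw [iteratedDeriv_succ, iteratedDeriv_one, hderiv,
    (hslope.fun_mul (hasDerivAt_quadratic A B C t).exp).deriv]
  ring

theorem convexOn_of_forall_convexOn_Icc {E : Type*} [AddCommGroup E] [Module ℝ E]
    {s : Set E} {f : E → ℝ} (hs : Convex ℝ s)
    (hf : ∀ x ∈ s, ∀ z ∈ s, ConvexOn ℝ (Icc 0 1) fun t : ℝ => f (x + t • (z - x))) :
    ConvexOn ℝ s f := by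
  refine ⟨hs, fun x hx z hz a b ha hb hab => ?_⟩
  have hseg := (hf x hx z hz).2 (left_mem_Icc.2 zero_le_one) (right_mem_Icc.2 zero_le_one)
    ha hb hab
  have hpt : a • x + b • z = x + b • (z - x) := by
    rw [eq_sub_of_add_eq hab]; module
  simpa [hpt] using hseg

theorem convexOn_of_iteratedDeriv_two_nonneg {E : Type*} [AddCommGroup E] [Module ℝ E]
    {s : Set E} {f : E → ℝ} (hs : Convex ℝ s)
    (hf : ∀ x v, ContDiff ℝ 2 fun t : ℝ => f (x + t • v))
    (hf'' : ∀ x ∈ s, ∀ v, 0 ≤ iteratedDeriv 2 (fun t : ℝ => f (x + t • v)) 0) :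
    ConvexOn ℝ s f := by
  refine convexOn_of_forall_convexOn_Icc hs fun x hx z hz => ?_
  set v := z - x
  have hg := hf x v
  refine convexOn_of_deriv2_nonneg (convex_Icc 0 1) hg.continuous.continuousOn
    (hg.differentiable (by norm_num)).differentiableOn ?_ fun t ht => ?_
  · rw [← iteratedDeriv_one]
    exact (hg.differentiable_iteratedDeriv 1 (by norm_num)).differentiableOn
  · rw [interior_Icc] at ht
    have hmem : x + t • v ∈ s := by
      simpa [v] using hs.add_smul_sub_mem hx hz ⟨ht.1.le, ht.2.le⟩
    -- `t ↦ f (x + t • v)` shifted by `t` is the line through `x + t • v`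
    have hshift := congrFun (iteratedDeriv_comp_add_const 2 (fun t : ℝ => f (x + t • v)) t) 0
    simp only [add_smul, zero_add] at hshift
    rw [← iteratedDeriv_eq_iterate, ← hshift]
    simpa [add_assoc, add_comm (t • v)] using hf'' _ hmem v

/-- The Hessian in `β` of the MDPDE loss
`ρ(β) = L₁|V|^{-α/2} - L₂|V|^{-α/2} exp(-(α/2)(y-Xβ)ᵀV⁻¹(y-Xβ))` equals
`(α+1) c(y,β) [Xᵀ V⁻¹ X - α Xᵀ d dᵀ X]` with `d = V⁻¹(y - Xβ)` and
`c(y,β) > 0` (the Hessian is expressed through second directional derivatives: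
for every direction `v`, `(d²/dt²) ρ(β + t v) |_{t=0}
  = (α+1) c(y,β) (vᵀ Xᵀ V⁻¹ X v - α (dᵀ X v)²)`); hence `ρ` is convex in `β`
on any convex region `𝓑` where `vᵀ Xᵀ V⁻¹ X v ≥ α (dᵀ X v)²` for all `v`. -/
theorem stmt16 {m p : ℕ} (X : Matrix (Fin m) (Fin p) ℝ) (y : Fin m → ℝ)
    (V : Matrix (Fin m) (Fin m) ℝ) (hV : V.PosDef) (α L₁ L₂ : ℝ)
    (hα : 0 < α) (hL₂ : 0 < L₂)
    (ρ : (Fin p → ℝ) → ℝ)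
    (hρ : ∀ β, ρ β = L₁ * V.det ^ (-(α / 2)) - L₂ * V.det ^ (-(α / 2)) *
      Real.exp (-(α / 2) * ((y - X *ᵥ β) ⬝ᵥ V⁻¹ *ᵥ (y - X *ᵥ β))))
    (d : (Fin p → ℝ) → (Fin m → ℝ))
    (hd : ∀ β, d β = V⁻¹ *ᵥ (y - X *ᵥ β))
    (c : (Fin p → ℝ) → ℝ)
    (hc : ∀ β, c β = (α / (α + 1)) * L₂ * V.det ^ (-(α / 2)) *
      Real.exp (-(α / 2) * ((y - X *ᵥ β) ⬝ᵥ V⁻¹ *ᵥ (y - X *ᵥ β)))) :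
    (∀ β v : Fin p → ℝ,
        iteratedDeriv 2 (fun t : ℝ => ρ (β + t • v)) 0
          = (α + 1) * c β *
            (v ⬝ᵥ (Xᵀ * V⁻¹ * X) *ᵥ v - α * (d β ⬝ᵥ (X *ᵥ v)) ^ 2))
      ∧ (∀ β, 0 < c β)
      ∧ ∀ 𝓑 : Set (Fin p → ℝ), Convex ℝ 𝓑 →
          (∀ β ∈ 𝓑, ∀ v : Fin p → ℝ,
            α * (d β ⬝ᵥ (X *ᵥ v)) ^ 2 ≤ v ⬝ᵥ (Xᵀ * V⁻¹ * X) *ᵥ v) →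
          ConvexOn ℝ 𝓑 ρ := by
  have hVinv : V⁻¹.IsSymm := isHermitian_iff_isSymm.1 hV.1.inv
  set K₁ := L₁ * V.det ^ (-(α / 2))
  set K₂ := L₂ * V.det ^ (-(α / 2))
  have hline : ∀ β v, (fun t : ℝ => ρ (β + t • v)) = fun t => K₁ - K₂ * exp
      (-(α / 2) * ((y - X *ᵥ β) ⬝ᵥ V⁻¹ *ᵥ (y - X *ᵥ β)) + α * (d β ⬝ᵥ X *ᵥ v) * t
        + -(α / 2) * ((X *ᵥ v) ⬝ᵥ V⁻¹ *ᵥ (X *ᵥ v)) * t ^ 2) := by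
    intro β v
    funext t
    rw [hρ, hd, mulVec_add, mulVec_smul, ← sub_sub,
      dotProduct_mulVec_sub_smul hVinv]
    congr 3
    ring
  have hhessian : ∀ β v : Fin p → ℝ, iteratedDeriv 2 (fun t : ℝ => ρ (β + t • v)) 0
      = (α + 1) * c β * (v ⬝ᵥ (Xᵀ * V⁻¹ * X) *ᵥ v - α * (d β ⬝ᵥ (X *ᵥ v)) ^ 2) := by
    intro β v
    rw [hline, iteratedDeriv_const_sub two_pos, iteratedDeriv_neg,
      iteratedDeriv_const_mul_field, iteratedDeriv_two_exp_quadratic, hc,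
      dotProduct_transpose_mul_mul_mulVec]
    simp only [K₂, mul_zero, add_zero, zero_pow two_ne_zero]
    field_simp
    ring
  have hc_pos : ∀ β, 0 < c β := fun β => by
    have hdet := hV.det_pos
    rw [hc]
    positivity
  refine ⟨hhessian, hc_pos, fun 𝓑 h𝓑 hdom => ?_⟩
  refine convexOn_of_iteratedDeriv_two_nonneg h𝓑 (fun β v => ?_) fun β hβ v => ?_
  · rw [hline]
    fun_prop
  · rw [hhessian]
    exact mul_nonneg (mul_pos (by linarith) (hc_pos β)).le (sub_nonneg.2 (hdom β hβ v))
end
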